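/- Assume P is the identity matrix and X_{i,j} = 0 whenever dist(i,j) > R. Let i, j ∈ L, set a_{i,j} = max{0, ⌈d_{i,j}−1⌉}, assume a_{i,j} ≥ 1, and let t ∈ ℝ satisfy e·τ < 2a_{i,j}+1. Then |C^{pp}_{i,j}(t)| ≤ √‖X‖ · (eτ/(2a_{i,j}+1))^{2a_{i,j}} / (√(a_{i,j}) · (1 − (eτ/(2a_{i,j}+1))²)). -/

import Mathlib

/-!
Write `C^{pp}_{i,j}(t) = ∑ₙ gₙ`. Since `X` has range `R`, `(X^m)_{i,j} = 0` whenever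
`m R < dist(i,j)`, so `gₙ = 0` for `n < a`. For `n ≥ a`, the bound `|(X^{n+1})_{i,j}| ≤ ‖X‖^{n+1}`
together with Stirling's lower bound on `(2n+1)!` gives
`|gₙ| ≤ √‖X‖ (eτ/(2n+1))^{2n+1} / √(2π(2n+1)) ≤ √‖X‖ q^{2n} / √a` with `q = eτ/(2a+1) < 1`,
and summing this geometric tail gives the claim.
-/

noncomputable def l2OpNorm {V : Type*} [Fintype V] [DecidableEq V] (M : Matrix V V ℝ) : ℝ :=
  ‖Matrix.toEuclideanCLM (𝕜 := ℝ) M‖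

noncomputable def Cpp {V : Type*} [Fintype V] [DecidableEq V]
    (X : Matrix V V ℝ) (i j : V) (t : ℝ) : ℝ :=
  ∑' n : ℕ, (-1 : ℝ) ^ n * t ^ (2 * n + 1) * ((X ^ (n + 1)) i j) / (Nat.factorial (2 * n + 1))

open scoped Nat
open Real

theorem Matrix.pow_apply_eq_zero_of_mul_lt_dist {V α : Type*} [Fintype V] [DecidableEq V]
    [Semiring α] {G : SimpleGraph V} (hG : G.Connected) {R : ℕ} {X : Matrix V V α}
    (hX : ∀ i j, R < G.dist i j → X i j = 0) (m : ℕ) {i j : V} (h : m * R < G.dist i j) :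
    (X ^ m) i j = 0 := by
  induction m generalizing j with
  | zero =>
    have hij : i ≠ j := by rintro rfl; simp at h
    simp [Matrix.one_apply_ne hij]
  | succ m ih =>
    rw [pow_succ, Matrix.mul_apply]
    refine Finset.sum_eq_zero fun k _ => ?_
    by_cases hik : m * R < G.dist i k
    · rw [ih hik, zero_mul]
    have hkj : R < G.dist k j := by
      have := hG.dist_triangle (u := i) (v := k) (w := j)
      rw [add_mul, one_mul] at h
      omega
    rw [hX k j hkj, mul_zero]

theorem succ_mul_lt_of_lt_toNat_ceil {d R n : ℕ}
    (hn : n < (max 0 ⌈(d : ℝ) / R - 1⌉).toNat) : (n + 1) * R < d := by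
  have hlt : (n : ℝ) + 1 < d / R := by
    have := Int.lt_ceil.1 ((Int.lt_toNat.1 hn).trans_le (max_le (by omega) le_rfl))
    push_cast at this
    linarith
  -- `d / 0 = 0`, so `hlt` already forces `R ≠ 0`.
  have hR : 0 < (R : ℝ) := by
    rcases (Nat.cast_nonneg R : (0 : ℝ) ≤ R).eq_or_lt with h | h
    · rw [← h, div_zero] at hlt; linarith
    · exact h
  exact_mod_cast (lt_div_iff₀ hR).1 hlt

theorem abs_apply_le_l2OpNorm {V : Type*} [Fintype V] [DecidableEq V] (M : Matrix V V ℝ)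
    (i j : V) : |M i j| ≤ l2OpNorm M := by
  set T := Matrix.toEuclideanCLM (𝕜 := ℝ) M
  have hM : inner ℝ (EuclideanSpace.single i (1 : ℝ)) (T (EuclideanSpace.single j 1)) = M i j := by
    simp [T, Matrix.inner_toEuclideanCLM]
  calc |M i j| ≤ ‖EuclideanSpace.single i (1 : ℝ)‖ * ‖T (EuclideanSpace.single j 1)‖ :=
        hM ▸ abs_real_inner_le_norm _ _
    _ ≤ 1 * (‖T‖ * ‖EuclideanSpace.single j (1 : ℝ)‖) := by
        gcongr
        · simp
        · exact T.le_opNorm _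
    _ = l2OpNorm M := by simp [l2OpNorm, T]

theorem abs_pow_apply_le_l2OpNorm_pow {V : Type*} [Fintype V] [DecidableEq V]
    (M : Matrix V V ℝ) {n : ℕ} (hn : n ≠ 0) (i j : V) : |(M ^ n) i j| ≤ l2OpNorm M ^ n :=
  (abs_apply_le_l2OpNorm _ i j).trans <| by
    simpa only [l2OpNorm, map_pow] using norm_pow_le' _ (Nat.pos_of_ne_zero hn)

theorem pow_div_factorial_le {x : ℝ} (hx : 0 ≤ x) {k : ℕ} (hk : k ≠ 0) :
    x ^ k / k ! ≤ (exp 1 * x / k) ^ k / √(2 * π * k) := by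
  calc x ^ k / k ! ≤ x ^ k / (√(2 * π * k) * (k / exp 1) ^ k) := by
        gcongr
        exact Stirling.le_factorial_stirling k
    _ = (exp 1 * x / k) ^ k / √(2 * π * k) := by
        rw [div_pow, div_pow, mul_pow]
        field_simp

theorem abs_tsum_le_of_eq_zero_of_abs_le_geometric {f : ℕ → ℝ} {a : ℕ} {c r : ℝ}
    (hr₀ : 0 ≤ r) (hr₁ : r < 1) (hf₀ : ∀ n < a, f n = 0) (hf : ∀ n, a ≤ n → |f n| ≤ c * r ^ n) :
    |∑' n, f n| ≤ c * r ^ a / (1 - r) := by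
  have hshift : ∑' n, f (n + a) = ∑' n, f n := by
    refine (add_left_injective a).tsum_eq fun n hn => ⟨n - a, Nat.sub_add_cancel ?_⟩
    by_contra! h
    exact hn (hf₀ n h)
  rw [← hshift, div_eq_mul_inv]
  refine tsum_of_norm_bounded (f := fun n => f (n + a))
    ((hasSum_geometric_of_lt_one hr₀ hr₁).mul_left (c * r ^ a)) fun n => ?_
  rw [Real.norm_eq_abs, mul_assoc, ← pow_add, add_comm a]
  exact hf _ (Nat.le_add_left a n)

theorem abs_Cpp_summand_le {V : Type*} [Fintype V] [DecidableEq V] (X : Matrix V V ℝ)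
    (i j : V) (t : ℝ) (n : ℕ) :
    |(-1 : ℝ) ^ n * t ^ (2 * n + 1) * ((X ^ (n + 1)) i j) / (Nat.factorial (2 * n + 1))| ≤
      √(l2OpNorm X) * ((exp 1 * (√(l2OpNorm X) * |t|) / (2 * n + 1 : ℕ)) ^ (2 * n + 1) /
        √(2 * π * (2 * n + 1 : ℕ))) := by
  set s := √(l2OpNorm X)
  have hN : l2OpNorm X = s ^ 2 := (sq_sqrt (norm_nonneg _)).symm
  calc _ = |t| ^ (2 * n + 1) * |(X ^ (n + 1)) i j| / (2 * n + 1)! := by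
        simp [abs_div, abs_mul]
    _ ≤ |t| ^ (2 * n + 1) * (s ^ 2) ^ (n + 1) / (2 * n + 1)! := by
        gcongr
        exact hN ▸ abs_pow_apply_le_l2OpNorm_pow X n.succ_ne_zero i j
    _ = s * ((s * |t|) ^ (2 * n + 1) / (2 * n + 1)!) := by ring
    _ ≤ _ := mul_le_mul_of_nonneg_left
        (pow_div_factorial_le (by positivity) (2 * n).succ_ne_zero) (sqrt_nonneg _)

theorem odd_pow_div_sqrt_le_geometric {x : ℝ} {a n : ℕ} (hx₀ : 0 ≤ x) (hx : x < 2 * a + 1)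
    (ha : 1 ≤ a) (han : a ≤ n) :
    (x / (2 * n + 1 : ℕ)) ^ (2 * n + 1) / √(2 * π * (2 * n + 1 : ℕ)) ≤
      ((x / (2 * a + 1)) ^ 2) ^ n / √a := by
  set q := x / (2 * a + 1)
  have hq₁ : q ≤ 1 := (div_le_one (by positivity)).2 hx.le
  have hbase : x / (2 * n + 1 : ℕ) ≤ q := by
    have : (a : ℝ) ≤ n := by exact_mod_cast han
    exact div_le_div_of_nonneg_left hx₀ (by positivity) (by push_cast; linarith)
  have hnum : (x / (2 * n + 1 : ℕ)) ^ (2 * n + 1) ≤ (q ^ 2) ^ n := by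
    rw [← pow_mul]
    exact (pow_le_pow_left₀ (by positivity) hbase _).trans
      (pow_le_pow_of_le_one (by positivity) hq₁ (Nat.le_succ _))
  have hden : √a ≤ √(2 * π * (2 * n + 1 : ℕ)) := by
    have : (a : ℝ) ≤ n := by exact_mod_cast han
    gcongr
    push_cast
    nlinarith [pi_gt_three]
  exact div_le_div₀ (by positivity) hnum (by positivity) hden

theorem lieb_robinson_P_one_causal_cone_pp_general {V : Type*} [Fintype V] [DecidableEq V]
    (G : SimpleGraph V) (hconn : G.Connected) (R : ℕ)
    (X : Matrix V V ℝ)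
    (hXloc : ∀ i j : V, R < G.dist i j → X i j = 0)
    (i j : V) (t : ℝ)
    (ha : 1 ≤ (max 0 ⌈(G.dist i j : ℝ) / R - 1⌉).toNat)
    (hcone : Real.exp 1 * (Real.sqrt (l2OpNorm X) * |t|) <
      2 * ((max 0 ⌈(G.dist i j : ℝ) / R - 1⌉).toNat : ℝ) + 1) :
    let τ : ℝ := Real.sqrt (l2OpNorm X) * |t|
    let a : ℕ := (max 0 ⌈(G.dist i j : ℝ) / R - 1⌉).toNat
    |Cpp X i j t| ≤
      Real.sqrt (l2OpNorm X) * (Real.exp 1 * τ / (2 * (a : ℝ) + 1)) ^ (2 * a) /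
        (Real.sqrt (a : ℝ) * (1 - (Real.exp 1 * τ / (2 * (a : ℝ) + 1)) ^ 2)) := by
  intro τ a
  have hzero : ∀ n < a, (X ^ (n + 1)) i j = 0 := fun n hn =>
    Matrix.pow_apply_eq_zero_of_mul_lt_dist hconn hXloc (n + 1) (succ_mul_lt_of_lt_toNat_ceil hn)
  set q := exp 1 * τ / (2 * a + 1)
  have hq₀ : 0 ≤ q := by positivity
  have hq₁ : q < 1 := (div_lt_one (by positivity)).2 hcone
  calc |Cpp X i j t| ≤ √(l2OpNorm X) / √a * (q ^ 2) ^ a / (1 - q ^ 2) := by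
        refine abs_tsum_le_of_eq_zero_of_abs_le_geometric (by positivity) (by nlinarith)
          (fun n hn => by simp [hzero n hn]) fun n hn => (abs_Cpp_summand_le X i j t n).trans ?_
        calc _ ≤ √(l2OpNorm X) * ((q ^ 2) ^ n / √a) := mul_le_mul_of_nonneg_left
              (odd_pow_div_sqrt_le_geometric (by positivity) hcone ha hn) (sqrt_nonneg _)
          _ = _ := by ring
    _ = _ := by rw [← pow_mul, mul_comm 2 a, div_mul_eq_mul_div, div_div]

/-- **Causal cone for `P = 𝟙`**, `pp` commutator. With
`a = max{0, ⌈dist(i,j)/R − 1⌉} ≥ 1` and `τ = √‖X‖·|t|` satisfying `e·τ < 2a+1`,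
`|C^{pp}_{i,j}(t)| ≤ √‖X‖ · (eτ/(2a+1))^{2a} / (√a · (1 − (eτ/(2a+1))²))`. -/
theorem lieb_robinson_P_one_causal_cone_pp {V : Type*} [Fintype V] [DecidableEq V]
    (G : SimpleGraph V) (hconn : G.Connected) (R : ℕ) (hR : 1 ≤ R)
    (X : Matrix V V ℝ) (hX : X.IsSymm)
    (hXloc : ∀ i j : V, R < G.dist i j → X i j = 0)
    (i j : V) (t : ℝ)
    (ha : 1 ≤ (max 0 ⌈(G.dist i j : ℝ) / R - 1⌉).toNat)
    (hcone : Real.exp 1 * (Real.sqrt (l2OpNorm X) * |t|) <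
      2 * ((max 0 ⌈(G.dist i j : ℝ) / R - 1⌉).toNat : ℝ) + 1) :
    let τ : ℝ := Real.sqrt (l2OpNorm X) * |t|
    let a : ℕ := (max 0 ⌈(G.dist i j : ℝ) / R - 1⌉).toNat
    |Cpp X i j t| ≤
      Real.sqrt (l2OpNorm X) * (Real.exp 1 * τ / (2 * (a : ℝ) + 1)) ^ (2 * a) /
        (Real.sqrt (a : ℝ) * (1 - (Real.exp 1 * τ / (2 * (a : ℝ) + 1)) ^ 2)) :=
  lieb_robinson_P_one_causal_cone_pp_general G hconn R X hXloc i j t ha hcone
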